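/- There exist decomposable 4-vectors α₁, α₂, α₃ ∈ ⋀⁴ℂ⁷ with ω₀ = α₁ + α₂ + α₃, such that the associated 4-dimensional subspaces P₁, P₂, P₃ of ℂ⁷ (where Pᵢ is spanned by the factors of αᵢ) satisfy dim(Pᵢ ∩ Pⱼ) = 1 for all i ≠ j and P₁ ∩ P₂ ∩ P₃ = 0. -/
import Mathlib


open ExteriorAlgebra

noncomputable section

/-- The standard basis 1-vectors `eᵢ` of `⋀¹ℂ⁷` (indexed from 0, so `e 0 = e₁`, …, `e 6 = e₇`). -/
def e (i : Fin 7) : ExteriorAlgebra ℂ (Fin 7 → ℂ) := ι ℂ (Pi.single i 1)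

/-- The degenerate 4-form
`ω₀ = e₁∧e₂∧e₃∧e₇ + e₄∧e₅∧e₆∧e₇ + e₂∧e₃∧e₅∧e₆ + e₁∧e₃∧e₄∧e₆`. -/
def ω₀ : ExteriorAlgebra ℂ (Fin 7 → ℂ) :=
  e 0 * e 1 * e 2 * e 6 + e 3 * e 4 * e 5 * e 6 + e 1 * e 2 * e 4 * e 5 + e 0 * e 2 * e 3 * e 5

/-- The wedge product of a tuple of vectors, as an element of the exterior algebra. -/
def wedge {n : ℕ} (w : Fin n → (Fin 7 → ℂ)) : ExteriorAlgebra ℂ (Fin 7 → ℂ) :=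
  (List.ofFn fun i => ι ℂ (w i)).prod

/-! ### Auxiliary material -/

/-- The witness family of vectors. -/
def wv : Fin 3 → Fin 4 → (Fin 7 → ℂ) :=
  ![![-(Pi.single 5 1 + Pi.single 6 1), Pi.single 0 1, Pi.single 1 1, Pi.single 2 1],
    ![Pi.single 2 1 - Pi.single 6 1, Pi.single 3 1, Pi.single 4 1, Pi.single 5 1],
    ![Pi.single 4 1 - Pi.single 0 1, Pi.single 1 1 + Pi.single 3 1, Pi.single 2 1, Pi.single 5 1]]

lemma wv00 : wv 0 0 = -(Pi.single 5 1 + Pi.single 6 1) := rfl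
lemma wv01 : wv 0 1 = Pi.single 0 1 := rfl
lemma wv02 : wv 0 2 = Pi.single 1 1 := rfl
lemma wv03 : wv 0 3 = Pi.single 2 1 := rfl
lemma wv10 : wv 1 0 = Pi.single 2 1 - Pi.single 6 1 := rfl
lemma wv11 : wv 1 1 = Pi.single 3 1 := rfl
lemma wv12 : wv 1 2 = Pi.single 4 1 := rfl
lemma wv13 : wv 1 3 = Pi.single 5 1 := rfl
lemma wv20 : wv 2 0 = Pi.single 4 1 - Pi.single 0 1 := rfl
lemma wv21 : wv 2 1 = Pi.single 1 1 + Pi.single 3 1 := rfl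
lemma wv22 : wv 2 2 = Pi.single 2 1 := rfl
lemma wv23 : wv 2 3 = Pi.single 5 1 := rfl

lemma ιP (i : Fin 7) : ι ℂ (Pi.single i (1:ℂ)) = e i := rfl

lemma e_sq' (i : Fin 7) (x : ExteriorAlgebra ℂ (Fin 7 → ℂ)) : e i * (e i * x) = 0 := by
  rw [← mul_assoc, show e i * e i = 0 from ι_sq_zero _, zero_mul]

lemma e_swap (i j : Fin 7) (_ : j < i) : e i * e j = -(e j * e i) :=
  eq_neg_of_add_eq_zero_left (ι_add_mul_swap _ _)

lemma e_swap' (i j : Fin 7) (h : j < i) (x : ExteriorAlgebra ℂ (Fin 7 → ℂ)) :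
    e i * (e j * x) = -(e j * (e i * x)) := by
  rw [← mul_assoc, e_swap i j h, neg_mul, mul_assoc]

lemma wedge_four (v : Fin 4 → (Fin 7 → ℂ)) :
    wedge v = ι ℂ (v 0) * (ι ℂ (v 1) * (ι ℂ (v 2) * ι ℂ (v 3))) := by
  simp [wedge, List.ofFn_succ, show (Fin.succ 2 : Fin 4) = 3 from rfl]

set_option maxHeartbeats 1000000 in
lemma key_eq : ω₀ = wedge (wv 0) + wedge (wv 1) + wedge (wv 2) := by
  rw [show ω₀ = e 0 * e 1 * e 2 * e 6 + e 3 * e 4 * e 5 * e 6 + e 1 * e 2 * e 4 * e 5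
    + e 0 * e 2 * e 3 * e 5 from rfl]
  rw [wedge_four, wedge_four, wedge_four]
  simp only [wv00, wv01, wv02, wv03, wv10, wv11, wv12, wv13, wv20, wv21, wv22, wv23,
    map_add, map_sub, map_neg, ιP]
  simp only [mul_add, add_mul, mul_sub, sub_mul, mul_neg, neg_mul, mul_assoc, neg_neg,
    sub_eq_add_neg, neg_add_rev]
  simp (config := { decide := true }) only [e_swap, e_swap', e_sq', mul_neg, neg_neg,
    mul_zero, zero_mul, neg_zero, add_zero, zero_add]
  abel

lemma li0 : LinearIndependent ℂ (wv 0) := by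
  rw [Fintype.linearIndependent_iff]
  intro g hg
  simp only [Fin.sum_univ_four, wv00, wv01, wv02, wv03] at hg
  have h0 := congrFun hg 0
  have h1 := congrFun hg 1
  have h2 := congrFun hg 2
  have h5 := congrFun hg 5
  simp [Pi.single_apply] at h0 h1 h2 h5
  intro j
  fin_cases j <;> simp_all

lemma li1 : LinearIndependent ℂ (wv 1) := by
  rw [Fintype.linearIndependent_iff]
  intro g hg
  simp only [Fin.sum_univ_four, wv10, wv11, wv12, wv13] at hg
  have h2 := congrFun hg 2
  have h3 := congrFun hg 3
  have h4 := congrFun hg 4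
  have h5 := congrFun hg 5
  simp [Pi.single_apply] at h2 h3 h4 h5
  intro j
  fin_cases j <;> simp_all

lemma li2 : LinearIndependent ℂ (wv 2) := by
  rw [Fintype.linearIndependent_iff]
  intro g hg
  have h0 := congrFun hg 0
  have h1 := congrFun hg 1
  have h2 := congrFun hg 2
  have h5 := congrFun hg 5
  simp only [Fin.sum_univ_four, wv20, wv21, wv22, wv23] at h0 h1 h2 h5
  simp [Pi.single_apply] at h0 h1 h2 h5
  intro j
  fin_cases j <;> simp_all

abbrev P (i : Fin 3) : Submodule ℂ (Fin 7 → ℂ) := Submodule.span ℂ (Set.range (wv i))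

lemma d0 : Module.finrank ℂ (P 0) = 4 := by rw [finrank_span_eq_card li0]; simp
lemma d1 : Module.finrank ℂ (P 1) = 4 := by rw [finrank_span_eq_card li1]; simp
lemma d2 : Module.finrank ℂ (P 2) = 4 := by rw [finrank_span_eq_card li2]; simp

lemma memP (i : Fin 3) (j : Fin 4) : wv i j ∈ P i := Submodule.subset_span ⟨j, rfl⟩

lemma sup01 : P 0 ⊔ P 1 = ⊤ := by
  rw [eq_top_iff, ← (Pi.basisFun ℂ (Fin 7)).span_eq, Submodule.span_le]
  rintro _ ⟨k, rfl⟩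
  have hb : ∀ k : Fin 7, (Pi.basisFun ℂ (Fin 7)) k = Pi.single k 1 := fun k => by
    simp [Pi.basisFun_apply]
  rw [hb]
  fin_cases k
  · exact Submodule.mem_sup_left (memP 0 1)
  · exact Submodule.mem_sup_left (memP 0 2)
  · exact Submodule.mem_sup_left (memP 0 3)
  · exact Submodule.mem_sup_right (memP 1 1)
  · exact Submodule.mem_sup_right (memP 1 2)
  · exact Submodule.mem_sup_right (memP 1 3)
  · exact Submodule.mem_sup.mpr ⟨-(wv 0 0), neg_mem (memP 0 0), -(wv 1 3), neg_mem (memP 1 3),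
      by rw [wv00, wv13]; abel⟩

lemma sup02 : P 0 ⊔ P 2 = ⊤ := by
  rw [eq_top_iff, ← (Pi.basisFun ℂ (Fin 7)).span_eq, Submodule.span_le]
  rintro _ ⟨k, rfl⟩
  have hb : ∀ k : Fin 7, (Pi.basisFun ℂ (Fin 7)) k = Pi.single k 1 := fun k => by
    simp [Pi.basisFun_apply]
  rw [hb]
  fin_cases k
  · exact Submodule.mem_sup_left (memP 0 1)
  · exact Submodule.mem_sup_left (memP 0 2)
  · exact Submodule.mem_sup_left (memP 0 3)
  · exact Submodule.mem_sup.mpr ⟨-(wv 0 2), neg_mem (memP 0 2), wv 2 1, memP 2 1,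
      by rw [wv02, wv21]; abel⟩
  · exact Submodule.mem_sup.mpr ⟨wv 0 1, memP 0 1, wv 2 0, memP 2 0,
      by rw [wv01, wv20]; abel⟩
  · exact Submodule.mem_sup_right (memP 2 3)
  · exact Submodule.mem_sup.mpr ⟨-(wv 0 0), neg_mem (memP 0 0), -(wv 2 3), neg_mem (memP 2 3),
      by rw [wv00, wv23]; abel⟩

lemma sup12 : P 1 ⊔ P 2 = ⊤ := by
  rw [eq_top_iff, ← (Pi.basisFun ℂ (Fin 7)).span_eq, Submodule.span_le]
  rintro _ ⟨k, rfl⟩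
  have hb : ∀ k : Fin 7, (Pi.basisFun ℂ (Fin 7)) k = Pi.single k 1 := fun k => by
    simp [Pi.basisFun_apply]
  rw [hb]
  fin_cases k
  · exact Submodule.mem_sup.mpr ⟨wv 1 2, memP 1 2, -(wv 2 0), neg_mem (memP 2 0),
      by rw [wv12, wv20]; abel⟩
  · exact Submodule.mem_sup.mpr ⟨-(wv 1 1), neg_mem (memP 1 1), wv 2 1, memP 2 1,
      by rw [wv11, wv21]; abel⟩
  · exact Submodule.mem_sup_right (memP 2 2)
  · exact Submodule.mem_sup_left (memP 1 1)
  · exact Submodule.mem_sup_left (memP 1 2)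
  · exact Submodule.mem_sup_left (memP 1 3)
  · exact Submodule.mem_sup.mpr ⟨-(wv 1 0), neg_mem (memP 1 0), wv 2 2, memP 2 2,
      by rw [wv10, wv22]; abel⟩

lemma inf01 : Module.finrank ℂ (P 0 ⊓ P 1 : Submodule ℂ (Fin 7 → ℂ)) = 1 := by
  have key := Submodule.finrank_sup_add_finrank_inf_eq (P 0) (P 1)
  rw [sup01, finrank_top, Module.finrank_fin_fun, d0, d1] at key
  omega

lemma inf02 : Module.finrank ℂ (P 0 ⊓ P 2 : Submodule ℂ (Fin 7 → ℂ)) = 1 := by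
  have key := Submodule.finrank_sup_add_finrank_inf_eq (P 0) (P 2)
  rw [sup02, finrank_top, Module.finrank_fin_fun, d0, d2] at key
  omega

lemma inf12 : Module.finrank ℂ (P 1 ⊓ P 2 : Submodule ℂ (Fin 7 → ℂ)) = 1 := by
  have key := Submodule.finrank_sup_add_finrank_inf_eq (P 1) (P 2)
  rw [sup12, finrank_top, Module.finrank_fin_fun, d1, d2] at key
  omega

lemma inf10 : Module.finrank ℂ (P 1 ⊓ P 0 : Submodule ℂ (Fin 7 → ℂ)) = 1 := by
  rw [inf_comm]; exact inf01

lemma inf20 : Module.finrank ℂ (P 2 ⊓ P 0 : Submodule ℂ (Fin 7 → ℂ)) = 1 := by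
  rw [inf_comm]; exact inf02

lemma inf21 : Module.finrank ℂ (P 2 ⊓ P 1 : Submodule ℂ (Fin 7 → ℂ)) = 1 := by
  rw [inf_comm]; exact inf12

lemma triple : P 0 ⊓ P 1 ⊓ P 2 = ⊥ := by
  rw [eq_bot_iff]
  rintro x ⟨⟨hA, hB⟩, hC⟩
  obtain ⟨a, ha⟩ := (Submodule.mem_span_range_iff_exists_fun ℂ).mp hA
  obtain ⟨b, hb⟩ := (Submodule.mem_span_range_iff_exists_fun ℂ).mp hB
  obtain ⟨c, hc⟩ := (Submodule.mem_span_range_iff_exists_fun ℂ).mp hC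
  simp only [Fin.sum_univ_four, wv00, wv01, wv02, wv03] at ha
  simp only [Fin.sum_univ_four, wv10, wv11, wv12, wv13] at hb
  simp only [Fin.sum_univ_four, wv20, wv21, wv22, wv23] at hc
  have a3 := congrFun ha 3
  have a4 := congrFun ha 4
  have a5 := congrFun ha 5
  have a6 := congrFun ha 6
  have b0 := congrFun hb 0
  have b1 := congrFun hb 1
  have b2 := congrFun hb 2
  have b6 := congrFun hb 6
  have c6 := congrFun hc 6
  simp [Pi.single_apply] at a3 a4 a5 a6 b0 b1 b2 b6 c6
  have : x = 0 := by
    funext k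
    fin_cases k <;> simp_all <;> linear_combination -b6 + 2*c6
  simp [this]

/-- `ω₀` is a sum of three decomposable 4-vectors whose associated 4-dimensional subspaces
`P₁, P₂, P₃ ⊆ ℂ⁷` pairwise meet in lines and have trivial triple intersection. -/
theorem stmt_12 :
    ∃ w : Fin 3 → Fin 4 → (Fin 7 → ℂ),
      ω₀ = wedge (w 0) + wedge (w 1) + wedge (w 2) ∧
      (∀ i, Module.finrank ℂ (Submodule.span ℂ (Set.range (w i))) = 4) ∧
      (∀ i j, i ≠ j → Module.finrank ℂ
        (Submodule.span ℂ (Set.range (w i)) ⊓ Submodule.span ℂ (Set.range (w j)) :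
          Submodule ℂ (Fin 7 → ℂ)) = 1) ∧
      Submodule.span ℂ (Set.range (w 0)) ⊓ Submodule.span ℂ (Set.range (w 1)) ⊓
        Submodule.span ℂ (Set.range (w 2)) = ⊥ := by
  refine ⟨wv, key_eq, ?_, ?_, triple⟩
  · intro i
    fin_cases i
    · exact d0
    · exact d1
    · exact d2
  · intro i j hij
    fin_cases i <;> fin_cases j
    · exact absurd rfl hij
    · exact inf01
    · exact inf02
    · exact inf10
    · exact absurd rfl hij
    · exact inf12
    · exact inf20
    · exact inf21
    · exact absurd rfl hij

end
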